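/- The function f(x) = |cos(x)| is not positive semi-definite on ℝ: there exist n ∈ ℕ, points x₁,…,xₙ ∈ ℝ and complex weights w₁,…,wₙ such that ∑_{i,j} wᵢ w̄ⱼ |cos(xᵢ − xⱼ)| < 0. -/

import Mathlib

/-! Since `|cos|` is `π`-periodic, on the points `k π / 4`, `k = 0, 1, 2, 3`, the kernel
`|cos (xᵢ - xⱼ)|` is the circulant matrix with first row `1, √2/2, 0, √2/2`. Its value on the
alternating weights `(-1)ᵏ` is `4 (1 - √2) < 0`. -/

open Real

theorem abs_cos_add_int_mul_pi (x : ℝ) (n : ℤ) : |cos (x + n * π)| = |cos x| := by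
  rw [cos_add_int_mul_pi, abs_mul, abs_neg_one_zpow, one_mul]

noncomputable def absCosQuarterPi (k : ℤ) : ℝ :=
  if k % 4 = 0 then 1 else if k % 4 = 2 then 0 else √2 / 2

theorem abs_cos_int_mul_pi_div_four (k : ℤ) : |cos (k * (π / 4))| = absCosQuarterPi k := by
  have hk : (k : ℝ) * (π / 4) = (k % 4 : ℤ) * (π / 4) + (k / 4 : ℤ) * π := by
    conv_lhs => rw [← Int.emod_add_mul_ediv k 4]
    push_cast; ring
  rw [hk, abs_cos_add_int_mul_pi, absCosQuarterPi]
  have h0 := Int.emod_nonneg k (by norm_num : (4:ℤ) ≠ 0)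
  have h4 := Int.emod_lt_of_pos k (by norm_num : (0:ℤ) < 4)
  have hs : 0 ≤ √2 / 2 := by positivity
  interval_cases (k % 4)
  · simp
  · simp [cos_pi_div_four, abs_of_nonneg hs]
  · simp [show 2 * (π / 4) = π / 2 by ring]
  · have : cos (3 * (π / 4)) = -(√2 / 2) := by
      rw [show 3 * (π / 4) = π - π / 4 by ring, cos_pi_sub, cos_pi_div_four]
    simp [this, abs_of_nonneg hs]

theorem re_sum_ofReal_mul_conj {ι : Type*} [Fintype ι] (w : ι → ℝ) (K : ι → ι → ℝ) :
    (∑ i, ∑ j, (w i : ℂ) * starRingEnd ℂ (w j) * (K i j : ℂ)).re =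
      ∑ i, ∑ j, w i * w j * K i j := by
  simp only [Complex.conj_ofReal]
  norm_cast

theorem sum_alternating_absCosQuarterPi :
    ∑ i : Fin 4, ∑ j : Fin 4, (-1) ^ (i : ℕ) * (-1) ^ (j : ℕ) * absCosQuarterPi (i - j) =
      4 - 4 * √2 := by
  simp [Fin.sum_univ_four, absCosQuarterPi]
  ring

/-- The function `x ↦ |cos x|` is not positive semi-definite on ℝ: there exist
points `x₁,…,xₙ` and complex weights `w₁,…,wₙ` such that
`∑ᵢⱼ wᵢ w̄ⱼ |cos (xᵢ - xⱼ)| < 0`. -/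
theorem abs_cos_not_posSemidef :
    ∃ (n : ℕ) (x : Fin n → ℝ) (w : Fin n → ℂ),
      (∑ i, ∑ j, w i * (starRingEnd ℂ) (w j) *
          ((|Real.cos (x i - x j)| : ℝ) : ℂ)).re < 0 := by
  refine ⟨4, fun i => (i : ℕ) * (π / 4), fun i => ((-1) ^ (i : ℕ) : ℝ), ?_⟩
  have hx (i j : Fin 4) :
      (i : ℕ) * (π / 4) - (j : ℕ) * (π / 4) = ((i - j : ℤ) : ℝ) * (π / 4) := by
    push_cast; ring
  simp only [re_sum_ofReal_mul_conj, hx, abs_cos_int_mul_pi_div_four,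
    sum_alternating_absCosQuarterPi]
  linarith [one_lt_sqrt_two]
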